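/- Let 𝕜 be a field, ι a finite index type, (V_i)_{i∈ι} a family of 𝕜-vector spaces, and v an element of the tensor product ⨂_{i∈ι} V_i. For each j ∈ ι let U_j(v) be the j-th minimal subspace of v. Then: (i) each U_j(v) is finite-dimensional; (ii) v lies in the range of the canonical linear map ⨂_{i∈ι} U_i(v) → ⨂_{i∈ι} V_i induced by the inclusions U_i(v) ↪ V_i; (iii) (minimality) for every family (N_i)_{i∈ι} of subspaces N_i ≤ V_i such that v lies in the range of the canonical map ⨂_{i∈ι} N_i → ⨂_{i∈ι} V_i induced by the inclusions, one has U_j(v) ≤ N_j for every j ∈ ι. -/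

import Mathlib

/-!
Contractions separate points: in the product basis built from bases `bᵢ` of the `Vᵢ`, the
coordinate of `z` at `p` is the `p j`-coordinate of the contraction of `z` in slot `j` against
the coordinate functionals `(bₖ).coord (p k)`. So if `P : Vⱼ → Vⱼ` fixes `Uⱼ(v)` pointwise, then
`v` and `(id ⊗ P) v` have the same contractions in slot `j`, hence are equal. Applying this to
retractions `Vᵢ → Uᵢ(v)` in every slot writes `v` as the image of a tensor of `⨂ᵢ Uᵢ(v)`.
Minimality is naturality of contraction along `⨂ᵢ Nᵢ → ⨂ᵢ Vᵢ`, and `Uⱼ(v)` is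
finite-dimensional because, for `v` a finite sum of pure tensors, every contraction lies in the
span of their `j`-th factors.
-/

open scoped TensorProduct

section
variable {ι : Type*} [Fintype ι] [deq : DecidableEq ι] {𝕜 : Type*} [Field 𝕜]
  {V : ι → Type*} [∀ i, AddCommGroup (V i)] [∀ i, Module 𝕜 (V i)]

/-- The multilinear map `(m_i)_{i} ↦ (∏_{k ≠ j} φ_k (m_k)) • m_j`. -/
def contractML (j : ι) (φ : ∀ k, V k →ₗ[𝕜] 𝕜) : MultilinearMap 𝕜 V (V j) where
  toFun m := (∏ k ∈ Finset.univ.erase j, φ k (m k)) • m j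
  map_update_add' := by
    intro inst m k x y
    have h : inst = deq := Subsingleton.elim _ _
    subst h
    try dsimp only
    rcases eq_or_ne k j with rfl | hkj
    · have hprod : ∀ z : V k,
          (∏ i ∈ Finset.univ.erase k, φ i (Function.update m k z i))
            = ∏ i ∈ Finset.univ.erase k, φ i (m i) := fun z =>
        Finset.prod_congr rfl fun i hi => by
          rw [Function.update_of_ne (Finset.ne_of_mem_erase hi)]
      rw [hprod, hprod, hprod, Function.update_self, Function.update_self,
        Function.update_self, smul_add]
    · have hmem : k ∈ Finset.univ.erase j := Finset.mem_erase.2 ⟨hkj, Finset.mem_univ k⟩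
      have hprod : ∀ z : V k,
          (∏ i ∈ Finset.univ.erase j, φ i (Function.update m k z i))
            = φ k z * ∏ i ∈ (Finset.univ.erase j) \ {k}, φ i (m i) := by
        intro z
        have h1 : ∀ i, φ i (Function.update m k z i)
            = Function.update (fun i => φ i (m i)) k (φ k z) i := fun i =>
          Function.apply_update (fun i v => φ i v) m k z i
        rw [Finset.prod_congr rfl (fun i _ => h1 i)]
        exact Finset.prod_update_of_mem hmem _ _
      have hj : ∀ z : V k, Function.update m k z j = m j := fun z =>
        Function.update_of_ne (Ne.symm hkj) _ _
      rw [hprod, hprod, hprod, hj, hj, hj, map_add, add_mul, add_smul]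
  map_update_smul' := by
    intro inst m k c x
    have h : inst = deq := Subsingleton.elim _ _
    subst h
    try dsimp only
    rcases eq_or_ne k j with rfl | hkj
    · have hprod : ∀ z : V k,
          (∏ i ∈ Finset.univ.erase k, φ i (Function.update m k z i))
            = ∏ i ∈ Finset.univ.erase k, φ i (m i) := fun z =>
        Finset.prod_congr rfl fun i hi => by
          rw [Function.update_of_ne (Finset.ne_of_mem_erase hi)]
      rw [hprod, hprod, Function.update_self, Function.update_self, smul_comm]
    · have hmem : k ∈ Finset.univ.erase j := Finset.mem_erase.2 ⟨hkj, Finset.mem_univ k⟩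
      have hprod : ∀ z : V k,
          (∏ i ∈ Finset.univ.erase j, φ i (Function.update m k z i))
            = φ k z * ∏ i ∈ (Finset.univ.erase j) \ {k}, φ i (m i) := by
        intro z
        have h1 : ∀ i, φ i (Function.update m k z i)
            = Function.update (fun i => φ i (m i)) k (φ k z) i := fun i =>
          Function.apply_update (fun i v => φ i v) m k z i
        rw [Finset.prod_congr rfl (fun i _ => h1 i)]
        exact Finset.prod_update_of_mem hmem _ _
      have hj : ∀ z : V k, Function.update m k z j = m j := fun z =>
        Function.update_of_ne (Ne.symm hkj) _ _
      rw [hprod, hprod, hj, hj, map_smul, smul_eq_mul, mul_assoc, mul_smul]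

/-- The contraction `id_j ⊗ φ : ⨂ᵢ Vᵢ → V j` obtained by lifting the multilinear map
`(m_i)ᵢ ↦ (∏_{k ≠ j} φ_k (m_k)) • m_j`. -/
noncomputable def contract (j : ι) (φ : ∀ k, V k →ₗ[𝕜] 𝕜) :
    (⨂[𝕜] i, V i) →ₗ[𝕜] V j :=
  PiTensorProduct.lift (contractML j φ)

/-- The `j`-th minimal subspace of a tensor `v`. -/
noncomputable def minimalSubspace (j : ι) (v : ⨂[𝕜] i, V i) : Submodule 𝕜 (V j) :=
  Submodule.span 𝕜 {x | ∃ φ : ∀ k, V k →ₗ[𝕜] 𝕜, contract j φ v = x}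

open PiTensorProduct

@[simp]
theorem contract_tprod (j : ι) (φ : ∀ k, V k →ₗ[𝕜] 𝕜) (m : ∀ i, V i) :
    contract j φ (tprod 𝕜 m) = (∏ k ∈ Finset.univ.erase j, φ k (m k)) • m j := by
  simp [contract, contractML]

theorem contract_map {W : ι → Type*} [∀ i, AddCommGroup (W i)] [∀ i, Module 𝕜 (W i)]
    (j : ι) (φ : ∀ k, V k →ₗ[𝕜] 𝕜) (f : ∀ i, W i →ₗ[𝕜] V i) (x : ⨂[𝕜] i, W i) :
    contract j φ (map f x) = f j (contract j (fun k => φ k ∘ₗ f k) x) := by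
  have h : contract j φ ∘ₗ map f = f j ∘ₗ contract j (fun k => φ k ∘ₗ f k) := by
    ext m
    simp
  exact DFunLike.congr_fun h x

theorem contract_congr (j : ι) {φ ψ : ∀ k, V k →ₗ[𝕜] 𝕜} (h : ∀ k, k ≠ j → φ k = ψ k) :
    contract j φ = contract j ψ := by
  ext m
  simp only [LinearMap.compMultilinearMap_apply, contract_tprod]
  congr 1
  exact Finset.prod_congr rfl fun k hk => by rw [h k (Finset.ne_of_mem_erase hk)]

theorem Basis.piTensorProduct_repr_eq_coord_contract {κ : ι → Type*}
    (b : ∀ i, Module.Basis (κ i) 𝕜 (V i)) (j : ι) (p : ∀ i, κ i) (z : ⨂[𝕜] i, V i) :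
    (Basis.piTensorProduct b).repr z p
      = (b j).coord (p j) (contract j (fun k => (b k).coord (p k)) z) := by
  have h : (Finsupp.lapply p) ∘ₗ (Basis.piTensorProduct b).repr.toLinearMap
      = (b j).coord (p j) ∘ₗ contract j (fun k => (b k).coord (p k)) := by
    ext m
    simp [← Finset.prod_erase_mul Finset.univ _ (Finset.mem_univ j)]
  exact DFunLike.congr_fun h z

theorem eq_zero_of_forall_contract_eq_zero (j : ι) {z : ⨂[𝕜] i, V i}
    (h : ∀ φ : ∀ k, V k →ₗ[𝕜] 𝕜, contract j φ z = 0) : z = 0 := by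
  let b := fun i => Module.Basis.ofVectorSpace 𝕜 (V i)
  refine (Basis.piTensorProduct b).ext_elem fun p => ?_
  rw [Basis.piTensorProduct_repr_eq_coord_contract b j, h, map_zero, map_zero, Finsupp.zero_apply]

theorem contract_mem_minimalSubspace (j : ι) (φ : ∀ k, V k →ₗ[𝕜] 𝕜) (v : ⨂[𝕜] i, V i) :
    contract j φ v ∈ minimalSubspace j v :=
  Submodule.subset_span ⟨φ, rfl⟩

theorem minimalSubspace_le_of_mem_range {v : ⨂[𝕜] i, V i} {N : ∀ i, Submodule 𝕜 (V i)}
    (hv : v ∈ LinearMap.range (map fun i => (N i).subtype)) (j : ι) :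
    minimalSubspace j v ≤ N j := by
  obtain ⟨w, rfl⟩ := hv
  refine Submodule.span_le.2 ?_
  rintro _ ⟨φ, rfl⟩
  rw [contract_map]
  exact Submodule.coe_mem _

theorem minimalSubspace_finiteDimensional (j : ι) (v : ⨂[𝕜] i, V i) :
    FiniteDimensional 𝕜 (minimalSubspace j v) := by
  have hv : v ∈ Submodule.span 𝕜 (Set.range (PiTensorProduct.tprod 𝕜)) := by
    rw [span_tprod_eq_top]; exact Submodule.mem_top
  obtain ⟨n, c, t, rfl⟩ := Submodule.mem_span_set'.1 hv
  choose m hm using fun s => (t s).2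
  have := FiniteDimensional.span_of_finite 𝕜 (Set.finite_range fun s => m s j)
  refine Submodule.finiteDimensional_of_le (S₂ := Submodule.span 𝕜 (Set.range fun s => m s j))
    (Submodule.span_le.2 ?_)
  rintro _ ⟨φ, rfl⟩
  simp only [map_sum, map_smul, ← hm, contract_tprod, SetLike.mem_coe]
  exact Submodule.sum_mem _ fun s _ =>
    Submodule.smul_mem _ _ (Submodule.smul_mem _ _ (Submodule.subset_span ⟨s, rfl⟩))

theorem map_update_apply_eq_self_of_minimalSubspace {v : ⨂[𝕜] i, V i} {j : ι}
    (P : V j →ₗ[𝕜] V j) (hP : ∀ x ∈ minimalSubspace j v, P x = x) :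
    map (Function.update (fun _ => LinearMap.id) j P) v = v := by
  refine sub_eq_zero.1 (eq_zero_of_forall_contract_eq_zero j fun φ => ?_)
  have hφ : contract j (fun k => φ k ∘ₗ Function.update (fun _ => LinearMap.id) j P k)
      = contract j φ :=
    contract_congr j fun k hk => by rw [Function.update_of_ne hk, LinearMap.comp_id]
  rw [map_sub, contract_map, hφ, Function.update_self, hP _ (contract_mem_minimalSubspace j φ v),
    sub_self]

theorem map_apply_eq_self_of_minimalSubspace {v : ⨂[𝕜] i, V i} (P : ∀ i, V i →ₗ[𝕜] V i)
    (hP : ∀ i, ∀ x ∈ minimalSubspace i v, P i x = x) : map P v = v := by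
  suffices h : ∀ s : Finset ι, map (s.piecewise P fun _ => LinearMap.id) v = v by
    simpa using h Finset.univ
  intro s
  induction s using Finset.induction with
  | empty => simp
  | insert j s hj ih =>
    have hsplit : (insert j s).piecewise P (fun _ => LinearMap.id)
        = fun i => s.piecewise P (fun _ => LinearMap.id) i
            ∘ₗ Function.update (fun _ => LinearMap.id) j (P j) i := by
      funext i
      rcases eq_or_ne i j with rfl | hij
      · simp [hj]
      · simp [hij]
    rw [hsplit, map_comp, LinearMap.comp_apply,
      map_update_apply_eq_self_of_minimalSubspace (P j) (hP j), ih]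

theorem mem_range_map_minimalSubspace_subtype (v : ⨂[𝕜] i, V i) :
    v ∈ LinearMap.range (map fun i => (minimalSubspace i v).subtype) := by
  choose g hg using fun i =>
    LinearMap.exists_leftInverse_of_injective (minimalSubspace i v).subtype
      (Submodule.ker_subtype _)
  refine ⟨map g v, ?_⟩
  rw [← LinearMap.comp_apply, ← map_comp]
  exact map_apply_eq_self_of_minimalSubspace _ fun i x hx =>
    congrArg Subtype.val (LinearMap.congr_fun (hg i) ⟨x, hx⟩)

theorem minimalSubspace_finiteDimensional_mem_and_minimal (v : ⨂[𝕜] i, V i) :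
    (∀ j, FiniteDimensional 𝕜 (minimalSubspace j v)) ∧
    (v ∈ LinearMap.range (PiTensorProduct.map fun i => (minimalSubspace i v).subtype)) ∧
    (∀ N : ∀ i, Submodule 𝕜 (V i),
      v ∈ LinearMap.range (PiTensorProduct.map fun i => (N i).subtype) →
      ∀ j, minimalSubspace j v ≤ N j) :=
  ⟨fun j => minimalSubspace_finiteDimensional j v, mem_range_map_minimalSubspace_subtype v,
    fun _ hN j => minimalSubspace_le_of_mem_range hN j⟩

end
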